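/- Let V : ℝⁿ → ℝ be continuously differentiable with ‖∇V‖ ≤ σ and L_V-Lipschitz gradient, λ ∈ (0,1), T ∈ ℕ, and x* be a point with V(x*) > 0. Suppose a trajectory x_d(0) = x_d, x_d(1), ..., x_d(T) satisfies V(x_d(t+1)) ≤ λ V(x_d(t)) for all t < T and V(x_d(T)) ≥ V(x*). Then ‖x_d − x*‖ ≥ (−σ + √(σ² + 2L_V(λ^{−T} − 1)V(x*))) / L_V. -/

import Mathlib

theorem stmt_9 {n : ℕ} (V : EuclideanSpace ℝ (Fin n) → ℝ) (σ L_V lam : ℝ) (T : ℕ)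
    (xstar : EuclideanSpace ℝ (Fin n)) (xd : ℕ → EuclideanSpace ℝ (Fin n))
    (hV : ContDiff ℝ 1 V)
    (hgrad : ∀ x, ‖gradient V x‖ ≤ σ)
    (hVlip : ∀ x y, ‖gradient V x - gradient V y‖ ≤ L_V * ‖x - y‖)
    (hlam : lam ∈ Set.Ioo (0 : ℝ) 1)
    (hLV : 0 < L_V)
    (hVstar : 0 < V xstar)
    (hdec : ∀ t < T, V (xd (t + 1)) ≤ lam * V (xd t))
    (hend : V xstar ≤ V (xd T)) :
    ‖xd 0 - xstar‖ ≥
      (-σ + Real.sqrt (σ ^ 2 + 2 * L_V * ((lam ^ T)⁻¹ - 1) * V xstar)) / L_V := by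
  obtain ⟨hlam0, hlam1⟩ := hlam
  set r : ℝ := ‖xd 0 - xstar‖ with hr
  have hr0 : 0 ≤ r := norm_nonneg _
  have hσ0 : 0 ≤ σ := le_trans (norm_nonneg _) (hgrad 0)
  -- fderiv norm bound
  have hfd : ∀ x, ‖fderiv ℝ V x‖ ≤ σ := by
    intro x
    have h := hgrad x
    rwa [gradient, LinearIsometryEquiv.norm_map] at h
  -- V is σ-Lipschitz
  have hlip : ∀ x y : EuclideanSpace ℝ (Fin n), ‖V x - V y‖ ≤ σ * ‖x - y‖ := by
    intro x y
    exact Convex.norm_image_sub_le_of_norm_fderiv_le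
      (fun z _ => (hV.differentiable one_ne_zero).differentiableAt)
      (fun z _ => hfd z) convex_univ (Set.mem_univ y) (Set.mem_univ x)
  -- geometric decrease
  have hgeo : ∀ k ≤ T, V (xd k) ≤ lam ^ k * V (xd 0) := by
    intro k hk
    induction k with
    | zero => simp
    | succ m ih =>
      have h1 : V (xd (m + 1)) ≤ lam * V (xd m) := hdec m (by omega)
      have h2 : V (xd m) ≤ lam ^ m * V (xd 0) := ih (by omega)
      calc V (xd (m + 1)) ≤ lam * V (xd m) := h1
        _ ≤ lam * (lam ^ m * V (xd 0)) := by nlinarith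
        _ = lam ^ (m + 1) * V (xd 0) := by ring
  have hlamT : 0 < lam ^ T := pow_pos hlam0 T
  have hV0 : (lam ^ T)⁻¹ * V xstar ≤ V (xd 0) := by
    have h := le_trans hend (hgeo T le_rfl)
    rw [inv_mul_le_iff₀ hlamT]
    linarith
  -- linear bound
  have hlin : ((lam ^ T)⁻¹ - 1) * V xstar ≤ σ * r := by
    have h1 : V (xd 0) - V xstar ≤ σ * r := by
      have := hlip (xd 0) xstar
      calc V (xd 0) - V xstar ≤ ‖V (xd 0) - V xstar‖ := le_abs_self _
        _ ≤ σ * r := this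
    nlinarith
  -- sqrt bound
  have hsq : Real.sqrt (σ ^ 2 + 2 * L_V * ((lam ^ T)⁻¹ - 1) * V xstar) ≤ σ + L_V * r := by
    have h1 : σ ^ 2 + 2 * L_V * ((lam ^ T)⁻¹ - 1) * V xstar ≤ (σ + L_V * r) ^ 2 := by
      nlinarith [mul_le_mul_of_nonneg_left hlin hLV.le, sq_nonneg (L_V * r), mul_nonneg hσ0 (mul_nonneg hLV.le hr0)]
    calc Real.sqrt (σ ^ 2 + 2 * L_V * ((lam ^ T)⁻¹ - 1) * V xstar)
        ≤ Real.sqrt ((σ + L_V * r) ^ 2) := Real.sqrt_le_sqrt h1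
      _ = σ + L_V * r := Real.sqrt_sq (by positivity)
  rw [ge_iff_le, div_le_iff₀ hLV]
  linarith
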